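/- (Series rearrangement identity, specialized) For real ν > -1, real x, and real c > 0 with c not a nonpositive integer, e^{-x} ∑_{n=0}^{∞} (x^n / (c)_n) L_n^{(ν)}(x) = ∑_{n=0}^{∞} ((-x)^n / n!) ∑_{k=0}^{n} ((-n)_k (-n-ν)_k (-1)^k) / ((c)_k k!). -/

import Mathlib

/-!
Since `(-x)^k / k! · e^{-x} = ∑_s C(s, k) (-x)^s / s!`, the Chu–Vandermonde identity
`∑_k C(s, k) (a + k)_{n-k} / (n-k)! = (a + s)_n / n!` gives
`e^{-x} L_n^{(ν)}(x) = ∑_s (-x)^s / s! · (ν + 1 + s)_n / n!`.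
The left side is thus a double series in `(n, s)`, absolutely convergent because
`(c)_n ≥ min(c, 1)^n n!` and `|(b + s)_n| ≤ 2^{⌈|b|⌉ + s + n} n!`, so it may be summed along the
diagonals `n + s = N`. There `(-N)_n = (-1)^n N! / (N - n)!` and `(-N - ν)_n = (-1)^n (ν + 1 + N - n)_n`
turn each term into the corresponding term of the right side.
-/

open Finset

/-- Pochhammer symbol (rising factorial) `(a)_k` over the reals. -/
noncomputable def poch (a : ℝ) (k : ℕ) : ℝ := (ascPochhammer ℝ k).eval a

/-- Generalized Laguerre polynomial
`L_n^{(ν)}(x) = ∑_{k=0}^n (-1)^k binom(n+ν, n-k) x^k / k!`,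
where `binom(n+ν, n-k) = (ν+k+1)_{n-k}/(n-k)!`. -/
noncomputable def laguerre (ν : ℝ) (n : ℕ) (x : ℝ) : ℝ :=
  ∑ k ∈ Finset.range (n + 1),
    (-1 : ℝ) ^ k * (poch (ν + k + 1) (n - k) / (n - k).factorial) * x ^ k / k.factorial

theorem HasSum.sum_antidiagonal {α : Type*} [AddCommMonoid α] [TopologicalSpace α]
    [ContinuousAdd α] [RegularSpace α] {f : ℕ × ℕ → α} {a : α} (hf : HasSum f a) :
    HasSum (fun n => ∑ p ∈ antidiagonal n, f p) a :=
  (HasAntidiagonal.sigmaAntidiagonalEquivProd.hasSum_iff.2 hf).sigma fun n => by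
    rw [← sum_coe_sort]
    exact hasSum_fintype _

theorem poch_succ (a : ℝ) (n : ℕ) : poch a (n + 1) = poch a n * (a + n) :=
  ascPochhammer_succ_eval n a

theorem poch_neg (r : ℝ) (n : ℕ) : poch (-r) n = (-1) ^ n * poch (r - n + 1) n := by
  rw [poch, poch, ascPochhammer_eval_neg_eq_descPochhammer, descPochhammer_eval_eq_ascPochhammer]

theorem poch_neg_natCast (N n : ℕ) : poch (-(N : ℝ)) n = (-1) ^ n * N.descFactorial n := by
  rw [poch, ascPochhammer_eval_neg_eq_descPochhammer, descPochhammer_eval_eq_descFactorial]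

open Polynomial Ring in
theorem poch_add_natCast_div_factorial (a : ℝ) (s n : ℕ) :
    poch (a + s) n / n.factorial =
      ∑ k ∈ range (n + 1), s.choose k * (poch (a + k) (n - k) / (n - k).factorial) := by
  -- falling-factorial Chu–Vandermonde at `s + (a + n - 1)`
  have hv := descPochhammer_smeval_add (R := ℝ) n (Commute.all (s : ℝ) (a + n - 1))
  simp only [descPochhammer_smeval_eq_descFactorial] at hv
  simp only [descPochhammer_smeval_eq_ascPochhammer, ascPochhammer_smeval_eq_eval,
    Nat.sum_antidiagonal_eq_sum_range_succ_mk] at hv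
  rw [poch, show a + s = (s : ℝ) + (a + n - 1) - n + 1 by ring, hv, sum_div]
  refine sum_congr rfl fun k hk => ?_
  have hkn : k ≤ n := Nat.lt_succ_iff.mp (mem_range.mp hk)
  have hfac : (n.factorial : ℝ) = n.choose k * k.factorial * (n - k).factorial := by
    exact_mod_cast (Nat.choose_mul_factorial_mul_factorial hkn).symm
  have hchoose : (n.choose k : ℝ) ≠ 0 := by exact_mod_cast (Nat.choose_pos hkn).ne'
  rw [show a + n - 1 - ((n - k : ℕ) : ℝ) + 1 = a + k by push_cast [hkn]; ring, poch,
    Nat.descFactorial_eq_factorial_mul_choose, hfac]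
  field_simp
  push_cast
  ring

theorem hasSum_pow_div_factorial_exp (y : ℝ) :
    HasSum (fun n : ℕ => y ^ n / n.factorial) (Real.exp y) := by
  rw [Real.exp_eq_exp_ℝ]
  exact NormedSpace.expSeries_div_hasSum_exp y

theorem hasSum_choose_mul_pow_div_factorial (y : ℝ) (k : ℕ) :
    HasSum (fun s : ℕ => s.choose k * (y ^ s / s.factorial))
      (y ^ k / k.factorial * Real.exp y) := by
  rw [← hasSum_nat_add_iff' k,
    sum_eq_zero fun i hi => by simp [Nat.choose_eq_zero_of_lt (mem_range.mp hi)], sub_zero]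
  refine ((hasSum_pow_div_factorial_exp y).mul_left (y ^ k / k.factorial)).congr_fun fun m => ?_
  have hfac : ((m + k).factorial : ℝ) = (m + k).choose k * m.factorial * k.factorial := by
    exact_mod_cast (Nat.add_choose_mul_factorial_mul_factorial m k).symm
  have hchoose : ((m + k).choose k : ℝ) ≠ 0 := by exact_mod_cast (Nat.choose_pos (by omega)).ne'
  rw [hfac, pow_add]
  field_simp

theorem hasSum_exp_neg_mul_laguerre (ν x : ℝ) (n : ℕ) :
    HasSum (fun s : ℕ => (-x) ^ s / s.factorial * (poch (ν + 1 + s) n / n.factorial))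
      (Real.exp (-x) * laguerre ν n x) := by
  have hterms := hasSum_sum fun k (_ : k ∈ range (n + 1)) =>
    (hasSum_choose_mul_pow_div_factorial (-x) k).mul_left
      (poch (ν + 1 + k) (n - k) / (n - k).factorial)
  have hlaguerre : Real.exp (-x) * laguerre ν n x = ∑ k ∈ range (n + 1),
      poch (ν + 1 + k) (n - k) / (n - k).factorial * ((-x) ^ k / k.factorial * Real.exp (-x)) := by
    rw [laguerre, mul_sum]
    refine sum_congr rfl fun k _ => ?_
    rw [add_right_comm, neg_pow]
    ring
  rw [hlaguerre]
  refine hterms.congr_fun fun s => ?_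
  rw [poch_add_natCast_div_factorial, mul_sum]
  exact sum_congr rfl fun k _ => by ring

theorem abs_poch_le_poch_natCast {b : ℝ} {N : ℕ} (hb : |b| ≤ N) (n : ℕ) :
    |poch b n| ≤ poch N n := by
  induction n with
  | zero => simp [poch]
  | succ n ih =>
    rw [poch_succ, poch_succ, abs_mul]
    exact mul_le_mul ih ((abs_add_le _ _).trans (by simpa using hb))
      (abs_nonneg _) ((abs_nonneg _).trans ih)

theorem poch_natCast_le (N n : ℕ) : poch N n ≤ 2 ^ (N + n) * n.factorial := by
  rw [poch, ← Nat.cast_ascFactorial]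
  exact_mod_cast calc N.ascFactorial n = n.factorial * (N + n - 1).choose n :=
        Nat.ascFactorial_eq_factorial_mul_choose' N n
    _ ≤ n.factorial * 2 ^ (N + n) := by
        gcongr
        exact (Nat.choose_le_two_pow _ _).trans (Nat.pow_le_pow_right two_pos (Nat.sub_le _ _))
    _ = 2 ^ (N + n) * n.factorial := mul_comm _ _

theorem abs_poch_add_natCast_le (b : ℝ) (s n : ℕ) :
    |poch (b + s) n| ≤ 2 ^ (⌈|b|⌉₊ + s + n) * n.factorial := by
  have hb : |b + s| ≤ ((⌈|b|⌉₊ + s : ℕ) : ℝ) := by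
    push_cast
    exact (abs_add_le _ _).trans (by simpa using Nat.le_ceil |b|)
  exact (abs_poch_le_poch_natCast hb n).trans (poch_natCast_le _ n)

theorem pow_mul_factorial_le_poch {c : ℝ} (hc : 0 < c) (n : ℕ) :
    min c 1 ^ n * n.factorial ≤ poch c n := by
  induction n with
  | zero => simp [poch]
  | succ n ih =>
    have hstep : min c 1 * (n + 1) ≤ c + n := by
      nlinarith [min_le_left c 1, min_le_right c 1, (n.cast_nonneg : (0 : ℝ) ≤ n)]
    calc min c 1 ^ (n + 1) * (n + 1).factorial
        = min c 1 ^ n * n.factorial * (min c 1 * (n + 1)) := by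
          push_cast [Nat.factorial_succ]
          ring
      _ ≤ poch c n * (c + n) := by
        gcongr
        exact (ascPochhammer_pos n c hc).le
      _ = poch c (n + 1) := (poch_succ c n).symm

noncomputable def laguerreDoubleTerm (ν c x : ℝ) (p : ℕ × ℕ) : ℝ :=
  x ^ p.1 / poch c p.1 * ((-x) ^ p.2 / p.2.factorial * (poch (ν + 1 + p.2) p.1 / p.1.factorial))

theorem summable_laguerreDoubleTerm (ν x : ℝ) {c : ℝ} (hc : 0 < c) :
    Summable (laguerreDoubleTerm ν c x) := by
  have hm : 0 < min c 1 := lt_min hc one_pos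
  have hmajorant := (Real.summable_pow_div_factorial (2 * |x| / min c 1)).mul_of_nonneg
    (Real.summable_pow_div_factorial (2 * |x|)) (fun _ => by positivity) (fun _ => by positivity)
  refine (hmajorant.mul_left (2 ^ ⌈|ν + 1|⌉₊)).of_norm_bounded fun ⟨n, s⟩ => ?_
  have hpoch : 0 < poch c n := ascPochhammer_pos n c hc
  have hlower := pow_mul_factorial_le_poch hc n
  have hupper := abs_poch_add_natCast_le (ν + 1) s n
  simp only [laguerreDoubleTerm, Real.norm_eq_abs, abs_mul, abs_div, abs_pow, abs_neg,
    abs_of_pos hpoch, Nat.abs_cast]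
  calc |x| ^ n / poch c n * (|x| ^ s / s.factorial * (|poch (ν + 1 + s) n| / n.factorial))
      ≤ |x| ^ n / (min c 1 ^ n * n.factorial) *
          (|x| ^ s / s.factorial * (2 ^ (⌈|ν + 1|⌉₊ + s + n) * n.factorial / n.factorial)) := by
        gcongr
    _ = 2 ^ ⌈|ν + 1|⌉₊ * ((2 * |x| / min c 1) ^ n / n.factorial *
          ((2 * |x|) ^ s / s.factorial)) := by
        rw [div_pow, mul_pow, mul_pow, pow_add, pow_add]
        field_simp

theorem pow_mul_pow_div_factorial_mul_poch (ν x : ℝ) (n m : ℕ) :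
    x ^ n * ((-x) ^ m / m.factorial * (poch (ν + 1 + m) n / n.factorial))
      = (-x) ^ (n + m) / (n + m).factorial *
          (poch (-((n + m : ℕ) : ℝ)) n * poch (-((n + m : ℕ) : ℝ) - ν) n * (-1) ^ n /
            n.factorial) := by
  have hfac : ((n + m).factorial : ℝ) = m.factorial * (n + m).descFactorial n := by
    have := Nat.factorial_mul_descFactorial (Nat.le_add_right n m)
    rw [Nat.add_sub_cancel_left] at this
    exact_mod_cast this.symm
  have hdesc : ((n + m).descFactorial n : ℝ) ≠ 0 := by
    exact_mod_cast (Nat.descFactorial_pos.mpr (Nat.le_add_right n m)).ne'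
  rw [poch_neg_natCast, show -((n + m : ℕ) : ℝ) - ν = -((n + m : ℕ) + ν) by ring, poch_neg,
    show ((n + m : ℕ) : ℝ) + ν - n + 1 = ν + 1 + m by push_cast; ring, hfac, pow_add, neg_pow x n]
  field_simp
  ring_nf
  rw [show (-1 : ℝ) ^ (n * 4) = 1 from Even.neg_one_pow ⟨n * 2, by ring⟩, mul_one]

theorem sum_antidiagonal_laguerreDoubleTerm (ν c x : ℝ) (N : ℕ) :
    ∑ p ∈ antidiagonal N, laguerreDoubleTerm ν c x p
      = (-x) ^ N / N.factorial * ∑ k ∈ range (N + 1),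
          poch (-(N : ℝ)) k * poch (-(N : ℝ) - ν) k * (-1 : ℝ) ^ k / (poch c k * k.factorial) := by
  rw [mul_sum, Nat.sum_antidiagonal_eq_sum_range_succ_mk]
  refine sum_congr rfl fun n hn => ?_
  obtain ⟨m, rfl⟩ := Nat.exists_eq_add_of_le (Nat.lt_succ_iff.mp (mem_range.mp hn))
  rw [laguerreDoubleTerm, Nat.add_sub_cancel_left]
  have key := pow_mul_pow_div_factorial_mul_poch ν x n m
  simp only [div_eq_mul_inv, mul_inv] at key ⊢
  linear_combination (poch c n)⁻¹ * key

theorem series_rearrangement_general (ν c x : ℝ) (hc : c > 0) :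
    Real.exp (-x) * ∑' n : ℕ, x ^ n / poch c n * laguerre ν n x =
      ∑' n : ℕ, (-x) ^ n / n.factorial *
        ∑ k ∈ Finset.range (n + 1),
          poch (-(n : ℝ)) k * poch (-(n : ℝ) - ν) k * (-1 : ℝ) ^ k /
            (poch c k * k.factorial) := by
  have hsummable := summable_laguerreDoubleTerm ν x hc
  calc Real.exp (-x) * ∑' n : ℕ, x ^ n / poch c n * laguerre ν n x
      = ∑' n : ℕ, ∑' s : ℕ, laguerreDoubleTerm ν c x (n, s) := by
        rw [← tsum_mul_left]
        refine tsum_congr fun n => ?_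
        rw [mul_left_comm, ← (hasSum_exp_neg_mul_laguerre ν x n).tsum_eq, ← tsum_mul_left]
        rfl
    _ = ∑' N : ℕ, ∑ p ∈ antidiagonal N, laguerreDoubleTerm ν c x p := by
        rw [← hsummable.tsum_prod, hsummable.hasSum.sum_antidiagonal.tsum_eq]
    _ = _ := tsum_congr (sum_antidiagonal_laguerreDoubleTerm ν c x)

/-- Series rearrangement identity (the `p = 0, q = 1, y = -1` case of (1.1)). -/
theorem series_rearrangement (ν c x : ℝ) (hν : ν > -1) (hc : c > 0)
    (hc' : ∀ m : ℕ, c ≠ -(m : ℝ)) :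
    Real.exp (-x) * ∑' n : ℕ, x ^ n / poch c n * laguerre ν n x =
      ∑' n : ℕ, (-x) ^ n / n.factorial *
        ∑ k ∈ Finset.range (n + 1),
          poch (-(n : ℝ)) k * poch (-(n : ℝ) - ν) k * (-1 : ℝ) ^ k /
            (poch c k * k.factorial) :=
  series_rearrangement_general ν c x hc
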